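/- Let X be a completely regular (Tychonoff) topological space such that for every countable set A ⊆ X there exists a continuous mapping φ : C_p*(A) → C_p(X) with φ(y)|_A = y for every y ∈ C_p*(A). Then every countable subset A of X is strongly functionally discrete in X. -/

import Mathlib

/-!
Countable sets are closed: if `a ∈ closure S \ S`, Tychonoff functions `f k` vanishing at `a` and
equal to `1` at the first `k` points of `S` restrict to a sequence tending to `1` in `C_p*(S)`,
while their extensions all vanish at `a`. Hence a countable `A` is discrete, so for an injective
`e : A → ℕ` the indicators of `{a | e a < k}` lie in `C_p*(A)` and tend to `1`; renormalised, their
extensions give continuous `g k` on `X` tending to `1` pointwise. The cumulative maxima `H k` of the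
`g k` are monotone, the bands `{H n < 1/3} ∩ {2/3 < H (n + 1)}` are cozero sets, `a` lies in the
band `e a`, and a point `x` with `K` minimal such that `1/3 < H K x` has a neighbourhood meeting
only the band `K - 1`.
-/

open Set Topology

/-- `C_p(X)`: the continuous real-valued functions on `X`, topologized by pointwise
convergence (i.e. as a subspace of `X → ℝ` with the product topology). -/
abbrev Cp (X : Type*) [TopologicalSpace X] : Type _ := {f : X → ℝ // Continuous f}

/-- `C_p*(X)`: the bounded continuous real-valued functions on `X`, topologized by
pointwise convergence. -/
abbrev CpStar (X : Type*) [TopologicalSpace X] : Type _ :=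
  {f : X → ℝ // Continuous f ∧ ∃ M : ℝ, ∀ x, |f x| ≤ M}

/-- A set is functionally open (a cozero set) if it is the cozero set of a
continuous real-valued function. -/
def FunctionallyOpen {X : Type*} [TopologicalSpace X] (U : Set X) : Prop :=
  ∃ f : X → ℝ, Continuous f ∧ U = f ⁻¹' ({0}ᶜ)

/-- A subset `A` is strongly functionally discrete in `X` if there is a family of
functionally open sets `G a ∋ a` (for `a ∈ A`) which is discrete in `X`: every point
of `X` has a neighborhood meeting `G a` for at most one `a ∈ A`. -/
def StronglyFunctionallyDiscrete {X : Type*} [TopologicalSpace X] (A : Set X) : Prop :=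
  ∃ G : A → Set X,
    (∀ a : A, (a : X) ∈ G a) ∧
    (∀ a : A, FunctionallyOpen (G a)) ∧
    (∀ x : X, ∃ V ∈ 𝓝 x, {a : A | (V ∩ G a).Nonempty}.Subsingleton)

open Filter Function

def IsContinuousExtender {X : Type*} [TopologicalSpace X] (A : Set X)
    (φ : CpStar A → Cp X) : Prop :=
  Continuous φ ∧ ∀ y : CpStar A, ∀ a : A, (φ y).1 a = y.1 a

section

variable {X : Type*} [TopologicalSpace X]

theorem FunctionallyOpen.inter {U V : Set X} (hU : FunctionallyOpen U)
    (hV : FunctionallyOpen V) : FunctionallyOpen (U ∩ V) := by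
  obtain ⟨f, hf, rfl⟩ := hU
  obtain ⟨g, hg, rfl⟩ := hV
  exact ⟨f * g, hf.mul hg, by ext x; simp [not_or]⟩

theorem functionallyOpen_setOf_lt {f g : X → ℝ} (hf : Continuous f) (hg : Continuous g) :
    FunctionallyOpen {x | f x < g x} :=
  ⟨fun x => max (g x - f x) 0, (hg.sub hf).max continuous_const, by
    ext x; simp⟩

theorem exists_mem_nhds_subsingleton_bands {H : ℕ → X → ℝ} (hc : ∀ n, Continuous (H n))
    (hmono : Monotone H) {α β : ℝ} (hαβ : α < β) {x : X} (hx : ∃ k, α < H k x) :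
    ∃ V ∈ 𝓝 x, {n | (V ∩ {y | H n y < α ∧ β < H (n + 1) y}).Nonempty}.Subsingleton := by
  classical
  set K := Nat.find hx
  have hV : ∀ᶠ y in 𝓝 x, α < H K y ∧ ∀ j ∈ Iio K, H j y < β := by
    refine ((hc K).tendsto x |>.eventually_const_lt (Nat.find_spec hx)).and ?_
    refine (eventually_all_finite (finite_Iio K)).2 fun j hj => ?_
    exact (hc j).tendsto x |>.eventually_lt_const ((not_lt.1 (Nat.find_min hx hj)).trans_lt hαβ)
  refine ⟨_, hV, (subsingleton_singleton (a := K - 1)).anti ?_⟩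
  rintro n ⟨y, ⟨hyK, hyβ⟩, hyn, hyn1⟩
  have hnK : n < K := lt_of_not_ge fun hKn => (hmono hKn y).not_gt (hyn.trans hyK)
  have hKn : ¬ n + 1 < K := fun h => (hyβ _ h).not_gt hyn1
  exact mem_singleton_iff.2 (by omega)

theorem StronglyFunctionallyDiscrete.of_monotone {A : Set X} {H : ℕ → X → ℝ}
    (hc : ∀ n, Continuous (H n)) (hmono : Monotone H) {α β : ℝ} (hαβ : α < β)
    (hH : ∀ x, ∃ k, α < H k x) {e : A → ℕ} (he : Injective e)
    (heA : ∀ a : A, H (e a) a < α ∧ β < H (e a + 1) a) : StronglyFunctionallyDiscrete A := by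
  refine ⟨fun a => {y | H (e a) y < α ∧ β < H (e a + 1) y}, heA, fun a => ?_, fun x => ?_⟩
  · exact (functionallyOpen_setOf_lt (hc _) continuous_const).inter
      (functionallyOpen_setOf_lt continuous_const (hc _))
  · obtain ⟨V, hV, hsub⟩ := exists_mem_nhds_subsingleton_bands hc hmono hαβ (hH x)
    exact ⟨V, hV, hsub.preimage he⟩

theorem StronglyFunctionallyDiscrete.of_tendsto {A : Set X} {g : ℕ → X → ℝ}
    (hc : ∀ k, Continuous (g k)) (hg : ∀ x, Tendsto (fun k => g k x) atTop (𝓝 1))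
    {e : A → ℕ} (he : Injective e) (hgA : ∀ k (a : A), g k a = if e a < k then 1 else 0) :
    StronglyFunctionallyDiscrete A := by
  refine .of_monotone (H := partialSups g) (fun n => .partialSups fun k _ => hc k)
    (partialSups g).monotone (by norm_num : (1 / 3 : ℝ) < 2 / 3) (fun x => ?_) he fun a => ?_
  · obtain ⟨k, hk⟩ := ((hg x).eventually_const_lt (by norm_num : (1 / 3 : ℝ) < 1)).exists
    exact ⟨k, hk.trans_le (le_partialSups g k x)⟩
  · rw [Pi.partialSups_apply, Pi.partialSups_apply]
    constructor
    · refine (partialSups_le_iff.2 fun j hj => ?_).trans_lt (by norm_num : (0 : ℝ) < 1 / 3)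
      rw [hgA, if_neg hj.not_gt]
    · refine lt_of_lt_of_le ?_ (le_partialSups_of_le (g · a) le_rfl)
      rw [hgA, if_pos (Nat.lt_succ_self _)]
      norm_num

theorem CpStar.tendsto_nhds_of_eventually_eq {Y ι : Type*} [TopologicalSpace Y] {l : Filter ι}
    {y : ι → CpStar Y} {z : CpStar Y} (h : ∀ s, ∀ᶠ k in l, (y k).1 s = z.1 s) :
    Tendsto y l (𝓝 z) := by
  rw [tendsto_subtype_rng, tendsto_pi_nhds]
  exact fun s => tendsto_const_nhds.congr' ((h s).mono fun k hk => hk.symm)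

namespace IsContinuousExtender

variable {A : Set X} {φ : CpStar A → Cp X}

theorem tendsto_apply (hφ : IsContinuousExtender A φ) {ι : Type*} {l : Filter ι}
    {y : ι → CpStar A} {z : CpStar A} (h : ∀ a, ∀ᶠ k in l, (y k).1 a = z.1 a) (x : X) :
    Tendsto (fun k => (φ (y k)).1 x) l (𝓝 ((φ z).1 x)) :=
  (((continuous_apply x).comp continuous_subtype_val).tendsto _).comp
    ((hφ.1.tendsto z).comp (CpStar.tendsto_nhds_of_eventually_eq h))

theorem apply_eq_of_mem_closure (hφ : IsContinuousExtender A φ) (y : CpStar A) {v : X → ℝ}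
    (hv : Continuous v) (hvy : ∀ a : A, v a = y.1 a) {x : X} (hx : x ∈ closure A) :
    (φ y).1 x = v x :=
  EqOn.closure (fun a ha => (hφ.2 y ⟨a, ha⟩).trans (hvy ⟨a, ha⟩).symm) (φ y).2 hv hx

theorem isClosed [T1Space X] [CompletelyRegularSpace X] (hA : A.Countable)
    (hφ : IsContinuousExtender A φ) : IsClosed A := by
  refine isClosed_of_closure_subset fun a ha => by_contra fun haA => ?_
  obtain ⟨σ, rfl⟩ := hA.exists_eq_range (closure_nonempty_iff.1 ⟨a, ha⟩)
  choose f hfc hfa hfσ using fun k : ℕ => CompletelyRegularSpace.completely_regular a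
    (σ '' Iio k) ((finite_Iio k).image σ).isClosed (by rintro ⟨i, -, rfl⟩; exact haA ⟨i, rfl⟩)
  let y : ℕ → CpStar (range σ) := fun k => ⟨fun s => f k s, by fun_prop,
    1, fun s => abs_le.2 ⟨by linarith [(f k s).2.1], (f k s).2.2⟩⟩
  let one : CpStar (range σ) := ⟨1, continuous_const, 1, by simp⟩
  have hy : ∀ s : range σ, ∀ᶠ k in atTop, (y k).1 s = one.1 s := by
    rintro ⟨_, i, rfl⟩
    filter_upwards [eventually_gt_atTop i] with k hk
    simp [y, one, hfσ k ⟨i, hk, rfl⟩]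
  have h0 : ∀ k, (φ (y k)).1 a = 0 := fun k => by
    rw [hφ.apply_eq_of_mem_closure (y k) (continuous_subtype_val.comp (hfc k)) (fun _ => rfl) ha,
      comp_apply, hfa k, Set.Icc.coe_zero]
  have h1 : (φ one).1 a = 1 := hφ.apply_eq_of_mem_closure one continuous_const (fun _ => rfl) ha
  have := hφ.tendsto_apply hy a
  simp only [h0, h1] at this
  exact zero_ne_one (tendsto_nhds_unique tendsto_const_nhds this)

theorem exists_seq_eq_indicator_tendsto_one [DiscreteTopology A]
    (hφ : IsContinuousExtender A φ) (e : A → ℕ) :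
    ∃ g : ℕ → X → ℝ, (∀ k, Continuous (g k)) ∧ (∀ x, Tendsto (fun k => g k x) atTop (𝓝 1)) ∧
      ∀ k (a : A), g k a = if e a < k then 1 else 0 := by
  let z : ℕ → CpStar A := fun k => ⟨fun b => if e b < k then 1 else 0,
    continuous_of_discreteTopology, 1, fun b => by dsimp only; split_ifs <;> norm_num⟩
  let one : CpStar A := ⟨1, continuous_const, 1, by simp⟩
  refine ⟨fun k x => (φ (z k)).1 x - (φ one).1 x + 1,
    fun k => ((φ (z k)).2.sub (φ one).2).add continuous_const, fun x => ?_,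
    fun k a => by simp [hφ.2, z, one]⟩
  have hz : ∀ b : A, ∀ᶠ k in atTop, (z k).1 b = one.1 b := fun b => by
    filter_upwards [eventually_gt_atTop (e b)] with k hk
    simp [z, one, hk]
  simpa using ((hφ.tendsto_apply hz x).sub_const ((φ one).1 x)).add_const 1

end IsContinuousExtender

theorem discreteTopology_of_forall_subset_isClosed {A : Set X} (h : ∀ B ⊆ A, IsClosed B) :
    DiscreteTopology A :=
  discreteTopology_iff_forall_isClosed.2 fun t => by
    rw [← Subtype.val_injective.preimage_image t]
    exact (h _ (Subtype.coe_image_subset A t)).preimage continuous_subtype_val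

end

/-- If `X` is completely regular (Tychonoff) and for every countable `A ⊆ X` there is
a continuous extender `C_p*(A) → C_p(X)`, then every countable subset of `X` is
strongly functionally discrete in `X`. -/
theorem stmt_10 {X : Type*} [TopologicalSpace X] [T35Space X]
    (h : ∀ A : Set X, A.Countable → ∃ φ : CpStar A → Cp X, Continuous φ ∧
      ∀ y : CpStar A, ∀ a : A, (φ y).1 a = y.1 a) :
    ∀ A : Set X, A.Countable → StronglyFunctionallyDiscrete A := by
  intro A hA
  have : DiscreteTopology A := discreteTopology_of_forall_subset_isClosed fun B hB => by
    obtain ⟨ψ, hψ⟩ := h B (hA.mono hB)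
    exact IsContinuousExtender.isClosed (hA.mono hB) hψ
  have : Countable A := hA.to_subtype
  obtain ⟨e, he⟩ := Countable.exists_injective_nat A
  obtain ⟨φ, hφ⟩ := h A hA
  obtain ⟨g, hgc, hg1, hgA⟩ := IsContinuousExtender.exists_seq_eq_indicator_tendsto_one hφ e
  exact .of_tendsto hgc hg1 he hgA
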